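/- arXiv:2004.10132 — 3 statements merged into one kernel-verified Lean document; each statement's English description precedes it below -/
import Mathlib

section
/- Let ρ = (ρ₁,…,ρₙ) with ρᵢ : ℝ² → ℝ nonnegative integrable, ∫ρᵢ = βᵢ, and suppose the entropy ∫ρᵢ ln ρᵢ and second moments are finite. If the criticality condition Λ_I(β) := Σᵢ βᵢ (8π − Σⱼ aᵢⱼ βⱼ) = 0 holds (with A = (aᵢⱼ) symmetric), then the free energy F(ρ) := Σᵢ ∫ ρᵢ ln ρᵢ + Σᵢ Σⱼ (aᵢⱼ/4π) ∫∫ ρᵢ(x) ln|x−y| ρⱼ(y) dx dy is invariant under the scaling ρ_λ(x) = λ² ρ(λx), i.e. F(ρ_λ) = F(ρ) for all λ > 0. -/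
open MeasureTheory Real

noncomputable abbrev E2 := EuclideanSpace ℝ (Fin 2)

/-- The free energy functional `F(ρ) = Σᵢ ∫ ρᵢ ln ρᵢ
+ Σᵢⱼ (aᵢⱼ/4π) ∫∫ ρᵢ(x) ln|x−y| ρⱼ(y) dx dy`. -/
noncomputable def freeEnergy (n : ℕ) (A : Fin n → Fin n → ℝ)
    (ρ : Fin n → E2 → ℝ) : ℝ :=
  (∑ i, ∫ x, ρ i x * Real.log (ρ i x)) +
    ∑ i, ∑ j, (A i j / (4 * π)) *
      ∫ x, ∫ y, ρ i x * Real.log ‖x - y‖ * ρ j y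


lemma E2_finrank : Module.finrank ℝ E2 = 2 := finrank_euclideanSpace_fin

lemma prod_finrank : Module.finrank ℝ (E2 × E2) = 4 := by
  rw [Module.finrank_prod, E2_finrank]

instance : Measure.IsAddHaarMeasure (volume : Measure (E2 × E2)) :=
  Measure.prod.instIsAddHaarMeasure volume volume

-- entropy scaling
lemma ent_scale (f : E2 → ℝ) (hf0 : ∀ x, 0 ≤ f x) (hfInt : Integrable f)
    (hfEnt : Integrable (fun x => f x * |Real.log (f x)|)) {l : ℝ} (hl : 0 < l) :
    ∫ x, l ^ 2 * f (l • x) * Real.log (l ^ 2 * f (l • x))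
      = (∫ x, f x * Real.log (f x)) + (2 * Real.log l) * ∫ x, f x := by
  have h1 : ∫ x, l ^ 2 * f (l • x) * Real.log (l ^ 2 * f (l • x))
      = l ^ 2 * ∫ x, (fun z => f z * Real.log (l ^ 2 * f z)) (l • x) := by
    rw [← integral_const_mul]
    congr 1 with x
    ring
  rw [h1, Measure.integral_comp_smul volume (fun z => f z * Real.log (l ^ 2 * f z)) l,
    E2_finrank, smul_eq_mul]
  have habs : |((l : ℝ) ^ 2)⁻¹| = (l ^ 2)⁻¹ := by
    rw [abs_of_nonneg]; positivity
  rw [habs, ← mul_assoc, mul_inv_cancel₀ (by positivity), one_mul]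
  have hptw : (fun z => f z * Real.log (l ^ 2 * f z))
      = fun z => f z * Real.log (f z) + (2 * Real.log l) * f z := by
    funext z
    rcases eq_or_lt_of_le (hf0 z) with h | h
    · simp [← h]
    · rw [Real.log_mul (by positivity) h.ne', Real.log_pow]
      push_cast
      ring
  rw [hptw]
  have hml : Integrable (fun z => f z * Real.log (f z)) := by
    refine hfEnt.mono' ?_ ?_
    · exact (hfInt.aestronglyMeasurable.aemeasurable.mul
        (Real.measurable_log.comp_aemeasurable
          hfInt.aestronglyMeasurable.aemeasurable)).aestronglyMeasurable
    · filter_upwards with z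
      rw [Real.norm_eq_abs, abs_mul, abs_of_nonneg (hf0 z)]
  rw [integral_add hml (hfInt.const_mul _), integral_const_mul]

lemma diag_null : (volume : Measure E2).prod volume {p : E2 × E2 | p.1 = p.2} = 0 := by
  have hs : MeasurableSet {p : E2 × E2 | p.1 = p.2} :=
    measurableSet_eq_fun measurable_fst measurable_snd
  rw [Measure.prod_apply hs]
  have : ∀ x : E2, (Prod.mk x ⁻¹' {p : E2 × E2 | p.1 = p.2}) = {x} := by
    intro x; ext y; simp [eq_comm]
  simp [this]

lemma aesm_F (f g : E2 → ℝ) (hfInt : Integrable f) (hgInt : Integrable g) :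
    AEStronglyMeasurable (fun p : E2 × E2 => f p.1 * Real.log ‖p.1 - p.2‖ * g p.2)
      (volume.prod volume) := by
  have h1 : AEStronglyMeasurable (fun p : E2 × E2 => f p.1) (volume.prod volume) :=
    hfInt.aestronglyMeasurable.comp_quasiMeasurePreserving
      Measure.quasiMeasurePreserving_fst
  have h2 : AEStronglyMeasurable (fun p : E2 × E2 => g p.2) (volume.prod volume) :=
    hgInt.aestronglyMeasurable.comp_quasiMeasurePreserving
      Measure.quasiMeasurePreserving_snd
  have h3 : Measurable (fun p : E2 × E2 => Real.log ‖p.1 - p.2‖) :=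
    Real.measurable_log.comp (measurable_fst.sub measurable_snd).norm
  exact (h1.mul h3.aestronglyMeasurable).mul h2

lemma int_F (f g : E2 → ℝ) (hf0 : ∀ x, 0 ≤ f x) (hg0 : ∀ x, 0 ≤ g x)
    (hfInt : Integrable f) (hgInt : Integrable g)
    (hI : Integrable (fun p : E2 × E2 => f p.1 * |Real.log ‖p.1 - p.2‖| * g p.2)
      (volume.prod volume)) :
    Integrable (fun p : E2 × E2 => f p.1 * Real.log ‖p.1 - p.2‖ * g p.2)
      (volume.prod volume) := by
  refine hI.mono' (aesm_F f g hfInt hgInt) ?_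
  filter_upwards with p
  rw [Real.norm_eq_abs, abs_mul, abs_mul, abs_of_nonneg (hf0 p.1), abs_of_nonneg (hg0 p.2)]

lemma inter_scale (f g : E2 → ℝ) (hf0 : ∀ x, 0 ≤ f x) (hg0 : ∀ x, 0 ≤ g x)
    (hfInt : Integrable f) (hgInt : Integrable g)
    {l : ℝ} (hl : 0 < l)
    (hI : Integrable (fun p : E2 × E2 => f p.1 * |Real.log ‖p.1 - p.2‖| * g p.2)
      (volume.prod volume))
    (hIs : Integrable (fun p : E2 × E2 =>
      (l ^ 2 * f (l • p.1)) * |Real.log ‖p.1 - p.2‖| * (l ^ 2 * g (l • p.2)))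
      (volume.prod volume)) :
    ∫ x, ∫ y, (l ^ 2 * f (l • x)) * Real.log ‖x - y‖ * (l ^ 2 * g (l • y))
      = (∫ x, ∫ y, f x * Real.log ‖x - y‖ * g y)
        - Real.log l * ((∫ x, f x) * ∫ x, g x) := by
  set F : E2 × E2 → ℝ := fun p => f p.1 * Real.log ‖p.1 - p.2‖ * g p.2 with hF
  have hFint : Integrable F (volume.prod volume) := int_F f g hf0 hg0 hfInt hgInt hI
  -- scaled integrand integrable
  have hfs : Integrable (fun x : E2 => l ^ 2 * f (l • x)) :=
    ((integrable_comp_smul_iff volume f hl.ne').2 hfInt).const_mul _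
  have hgs : Integrable (fun x : E2 => l ^ 2 * g (l • x)) :=
    ((integrable_comp_smul_iff volume g hl.ne').2 hgInt).const_mul _
  have hFs : Integrable (fun p : E2 × E2 =>
      (l ^ 2 * f (l • p.1)) * Real.log ‖p.1 - p.2‖ * (l ^ 2 * g (l • p.2)))
      (volume.prod volume) := by
    refine int_F (fun x => l ^ 2 * f (l • x)) (fun x => l ^ 2 * g (l • x))
      (fun x => mul_nonneg (by positivity) (hf0 _))
      (fun x => mul_nonneg (by positivity) (hg0 _)) hfs hgs hIs
  -- iterated to product
  have h1 : ∫ x, ∫ y, (l ^ 2 * f (l • x)) * Real.log ‖x - y‖ * (l ^ 2 * g (l • y))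
      = ∫ p : E2 × E2, (l ^ 2 * f (l • p.1)) * Real.log ‖p.1 - p.2‖ * (l ^ 2 * g (l • p.2))
        ∂(volume.prod volume) :=
    (integral_integral hFs).trans rfl
  have h2 : ∫ x, ∫ y, f x * Real.log ‖x - y‖ * g y
      = ∫ p : E2 × E2, F p ∂(volume.prod volume) :=
    (integral_integral hFint).trans rfl
  rw [h1, h2]
  -- ae rewrite: off the diagonal
  have hae : (fun p : E2 × E2 =>
      (l ^ 2 * f (l • p.1)) * Real.log ‖p.1 - p.2‖ * (l ^ 2 * g (l • p.2)))
      =ᵐ[volume.prod volume]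
      (fun p : E2 × E2 => l ^ 4 * F (l • p)
        - Real.log l * ((l ^ 2 * f (l • p.1)) * (l ^ 2 * g (l • p.2)))) := by
    have : ∀ p : E2 × E2, p.1 ≠ p.2 →
        (l ^ 2 * f (l • p.1)) * Real.log ‖p.1 - p.2‖ * (l ^ 2 * g (l • p.2))
          = l ^ 4 * F (l • p)
            - Real.log l * ((l ^ 2 * f (l • p.1)) * (l ^ 2 * g (l • p.2))) := by
      intro p hp
      have hd : ‖p.1 - p.2‖ ≠ 0 := by
        simpa [sub_eq_zero] using hp
      have hnorm : ‖l • p.1 - l • p.2‖ = l * ‖p.1 - p.2‖ := by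
        rw [← smul_sub, norm_smul, Real.norm_eq_abs, abs_of_pos hl]
      simp only [hF, Prod.smul_fst, Prod.smul_snd, hnorm]
      rw [Real.log_mul hl.ne' hd]
      ring
    have hne : ∀ᵐ p : E2 × E2 ∂(volume.prod volume), p.1 ≠ p.2 := by
      rw [ae_iff]
      convert diag_null using 2
      ext p; simp
    filter_upwards [hne] with p hp using this p hp
  rw [integral_congr_ae hae]
  have hvol : (volume : Measure (E2 × E2)) = volume.prod volume := rfl
  have h_a : Integrable (fun p : E2 × E2 => l ^ 4 * F (l • p)) (volume.prod volume) := by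
    rw [← hvol]
    exact ((integrable_comp_smul_iff volume F hl.ne').2 (hvol ▸ hFint)).const_mul _
  have h_b : Integrable (fun p : E2 × E2 =>
      Real.log l * ((l ^ 2 * f (l • p.1)) * (l ^ 2 * g (l • p.2))))
      (volume.prod volume) := (hfs.mul_prod hgs).const_mul _
  rw [integral_sub h_a h_b, integral_const_mul, integral_const_mul,
    integral_prod_mul (fun x : E2 => l ^ 2 * f (l • x)) (fun y : E2 => l ^ 2 * g (l • y))]
  have key : ∀ h : E2 → ℝ, ∫ x : E2, l ^ 2 * h (l • x) = ∫ x, h x := by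
    intro h
    rw [integral_const_mul, Measure.integral_comp_smul volume h l, E2_finrank, smul_eq_mul,
      abs_of_nonneg (by positivity : (0:ℝ) ≤ ((l : ℝ) ^ 2)⁻¹), ← mul_assoc,
      mul_inv_cancel₀ (by positivity), one_mul]
  have keyF : ∫ p : E2 × E2, F (l • p) ∂(volume.prod volume) = (l ^ 4)⁻¹ * ∫ p, F p ∂(volume.prod volume) := by
    rw [← hvol, Measure.integral_comp_smul volume F l, prod_finrank, smul_eq_mul,
      abs_of_nonneg (by positivity : (0:ℝ) ≤ ((l : ℝ) ^ 4)⁻¹), hvol]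
  rw [keyF, key f, key g, ← mul_assoc,
    mul_inv_cancel₀ (by positivity : (l:ℝ) ^ 4 ≠ 0), one_mul]

theorem freeEnergy_scaling_invariant
    (n : ℕ) (A : Fin n → Fin n → ℝ) (hA : ∀ i j, A i j = A j i)
    (β : Fin n → ℝ) (hβ : ∀ i, 0 < β i)
    (ρ : Fin n → E2 → ℝ) (hρ : ∀ i x, 0 ≤ ρ i x)
    (hInt : ∀ i, Integrable (ρ i))
    (hmass : ∀ i, ∫ x, ρ i x = β i)
    (hEnt : ∀ i, Integrable (fun x => ρ i x * |Real.log (ρ i x)|))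
    (hM2 : ∀ i, Integrable (fun x => ‖x‖ ^ 2 * ρ i x))
    (hEntScaled : ∀ i, ∀ l : ℝ, 0 < l →
      Integrable (fun x => l ^ 2 * ρ i (l • x) * |Real.log (l ^ 2 * ρ i (l • x))|))
    (hInter : ∀ i j, Integrable (fun p : E2 × E2 =>
      ρ i p.1 * |Real.log ‖p.1 - p.2‖| * ρ j p.2) (volume.prod volume))
    (hInterScaled : ∀ i j, ∀ l : ℝ, 0 < l →
      Integrable (fun p : E2 × E2 =>
        (l ^ 2 * ρ i (l • p.1)) * |Real.log ‖p.1 - p.2‖| * (l ^ 2 * ρ j (l • p.2)))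
        (volume.prod volume))
    (hcrit : ∑ i, β i * (8 * π - ∑ j, A i j * β j) = 0) :
    ∀ l : ℝ, 0 < l →
      freeEnergy n A (fun i x => l ^ 2 * ρ i (l • x)) = freeEnergy n A ρ := by
  intro l hl
  simp only [freeEnergy]
  have hE : ∀ i, ∫ x, l ^ 2 * ρ i (l • x) * Real.log (l ^ 2 * ρ i (l • x))
      = (∫ x, ρ i x * Real.log (ρ i x)) + (2 * Real.log l) * β i := by
    intro i
    rw [ent_scale (ρ i) (hρ i) (hInt i) (hEnt i) hl, hmass i]
  have hJ : ∀ i j, ∫ x, ∫ y, (l ^ 2 * ρ i (l • x)) * Real.log ‖x - y‖ * (l ^ 2 * ρ j (l • y))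
      = (∫ x, ∫ y, ρ i x * Real.log ‖x - y‖ * ρ j y) - Real.log l * (β i * β j) := by
    intro i j
    rw [inter_scale (ρ i) (ρ j) (hρ i) (hρ j) (hInt i) (hInt j) hl (hInter i j)
      (hInterScaled i j l hl), hmass i, hmass j]
  rw [Finset.sum_congr rfl fun i _ => hE i,
    Finset.sum_congr rfl fun i (_ : i ∈ Finset.univ) =>
      Finset.sum_congr rfl fun j (_ : j ∈ Finset.univ) => by rw [hJ i j]]
  have hS : ∑ i, ∑ j, β i * (A i j * β j) = 8 * π * ∑ i, β i := by
    have h := hcrit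
    simp only [mul_sub, Finset.sum_sub_distrib, Finset.mul_sum, sub_eq_zero] at h
    rw [← h, Finset.sum_congr rfl fun i _ => mul_comm (β i) (8 * π), ← Finset.mul_sum]
  have hK : ∑ i, ∑ j, (A i j / (4 * π)) *
      ((∫ x, ∫ y, ρ i x * Real.log ‖x - y‖ * ρ j y) - Real.log l * (β i * β j))
      = (∑ i, ∑ j, (A i j / (4 * π)) * ∫ x, ∫ y, ρ i x * Real.log ‖x - y‖ * ρ j y)
        - (Real.log l / (4 * π)) * ∑ i, ∑ j, β i * (A i j * β j) := by
    simp only [mul_sub, Finset.sum_sub_distrib, Finset.mul_sum]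
    congr 1
    refine Finset.sum_congr rfl fun i _ => Finset.sum_congr rfl fun j _ => ?_
    ring
  rw [hK, hS, Finset.sum_add_distrib, ← Finset.mul_sum]
  have hπ : (π : ℝ) ≠ 0 := Real.pi_ne_zero
  field_simp
  ring
end

section
/- Let Υ : [0,∞) → ℝ be differentiable and convex with Υ' nondecreasing. Then for all x, y ∈ ℝ², (x·Υ'(|x|²) − y·Υ'(|y|²)) · (x − y) ≥ (1/2)|x − y|² (Υ'(|x|²) + Υ'(|y|²)). -/
open RealInnerProductSpace

theorem monotone_vector_field_lower_bound (Υ : ℝ → ℝ)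
    (hdiff : Differentiable ℝ Υ)
    (hconv : ConvexOn ℝ (Set.Ici (0 : ℝ)) Υ)
    (hmono : MonotoneOn (deriv Υ) (Set.Ici (0 : ℝ))) :
    ∀ x y : E2,
      ⟪(deriv Υ (‖x‖ ^ 2)) • x - (deriv Υ (‖y‖ ^ 2)) • y, x - y⟫ ≥
        (1 / 2) * ‖x - y‖ ^ 2 * (deriv Υ (‖x‖ ^ 2) + deriv Υ (‖y‖ ^ 2)) := by
  intro x y
  set a := deriv Υ (‖x‖ ^ 2) with ha
  set b := deriv Υ (‖y‖ ^ 2) with hb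
  have hx : (0 : ℝ) ≤ ‖x‖ ^ 2 := by positivity
  have hy : (0 : ℝ) ≤ ‖y‖ ^ 2 := by positivity
  have hkey : (‖x‖ ^ 2 - ‖y‖ ^ 2) * (a - b) ≥ 0 := by
    rcases le_total (‖x‖ ^ 2) (‖y‖ ^ 2) with h | h
    · have := hmono hx hy h
      nlinarith
    · have := hmono hy hx h
      nlinarith
  have hexp : ⟪a • x - b • y, x - y⟫ =
      a * ‖x‖ ^ 2 - a * ⟪x, y⟫ - b * ⟪y, x⟫ + b * ‖y‖ ^ 2 := by
    simp only [inner_sub_left, inner_sub_right, real_inner_smul_left,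
      real_inner_self_eq_norm_sq]
    ring
  have hns : ‖x - y‖ ^ 2 = ‖x‖ ^ 2 - 2 * ⟪x, y⟫ + ‖y‖ ^ 2 := by
    rw [norm_sub_sq_real]
  have hsym : ⟪y, x⟫ = ⟪x, y⟫ := real_inner_comm x y
  rw [ge_iff_le, hexp, hns, hsym]
  nlinarith [hkey]
end

section
/- Let A = (aᵢⱼ) be a symmetric n×n matrix with nonnegative entries and a_{nn} > 0, β ∈ (0,∞)ⁿ critical (i.e. Λ_I(β) = 0 and Λ_J(β) > 0 for all nonempty proper J ⊊ I, where Λ_J(β) = Σ_{i∈J}βᵢ(8π − Σ_{j∈J}aᵢⱼβⱼ)). Let 0 < κ < βₙ and define weights bᵢ = 1 for i ≠ n, bₙ = 1 − a_{nn}κ/(8π), and modified matrix ã with ã_{nn} = 0 and ãᵢⱼ = aᵢⱼ otherwise. Then for every nonempty J ⊆ I containing n, the weighted quantity Λ_J(β; b) := 8π Σ_{i∈J} bᵢβᵢ − Σ_{i∈J}Σ_{j∈J} ãᵢⱼ βᵢβⱼ satisfies Λ_J(β; b) ≥ a_{nn} βₙ (βₙ − κ) > 0. -/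
open Real

/-- `Λ_J(β) = Σ_{i∈J} βᵢ (8π − Σ_{j∈J} aᵢⱼ βⱼ)`. -/
noncomputable def Lam {ι : Type*} [DecidableEq ι] (A : ι → ι → ℝ) (β : ι → ℝ)
    (J : Finset ι) : ℝ :=
  ∑ i ∈ J, β i * (8 * π - ∑ j ∈ J, A i j * β j)

/-- Weighted quantity `Λ_J(β;b) = 8π Σ_{i∈J} bᵢβᵢ − Σ_{i∈J}Σ_{j∈J} ãᵢⱼβᵢβⱼ`. -/
noncomputable def LamW {ι : Type*} (Atil : ι → ι → ℝ) (b β : ι → ℝ)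
    (J : Finset ι) : ℝ :=
  8 * π * ∑ i ∈ J, b i * β i - ∑ i ∈ J, ∑ j ∈ J, Atil i j * β i * β j

lemma lam_expand {ι : Type*} [DecidableEq ι] (A : ι → ι → ℝ) (β : ι → ℝ)
    (J : Finset ι) :
    Lam A β J = 8 * π * ∑ i ∈ J, β i - ∑ i ∈ J, ∑ j ∈ J, A i j * β i * β j := by
  unfold Lam
  simp only [mul_sub, Finset.mul_sum]
  rw [Finset.sum_sub_distrib]
  congr 1
  · exact Finset.sum_congr rfl fun i _ => by ring
  · exact Finset.sum_congr rfl fun i _ => Finset.sum_congr rfl fun j _ => by ring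

theorem weighted_subcriticality {ι : Type*} [Fintype ι] [DecidableEq ι]
    (A : ι → ι → ℝ) (hA : ∀ i j, A i j = A j i) (hApos : ∀ i j, 0 ≤ A i j)
    (β : ι → ℝ) (hβ : ∀ i, 0 < β i)
    (n₀ : ι) (hnn : 0 < A n₀ n₀)
    (hcrit₁ : Lam A β Finset.univ = 0)
    (hcrit₂ : ∀ J : Finset ι, J.Nonempty → J ≠ Finset.univ → 0 < Lam A β J)
    (κ : ℝ) (hκ0 : 0 < κ) (hκβ : κ < β n₀)
    (b : ι → ℝ) (hb : ∀ i, b i = if i = n₀ then 1 - A n₀ n₀ * κ / (8 * π) else 1)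
    (Atil : ι → ι → ℝ)
    (hAtil : ∀ i j, Atil i j = if i = n₀ ∧ j = n₀ then 0 else A i j) :
    ∀ J : Finset ι, J.Nonempty → n₀ ∈ J →
      LamW Atil b β J ≥ A n₀ n₀ * β n₀ * (β n₀ - κ) ∧
        0 < A n₀ n₀ * β n₀ * (β n₀ - κ) := by
  intro J hJne hnJ
  have hπ : (8 : ℝ) * π ≠ 0 := by positivity
  have h1 : ∑ i ∈ J, b i * β i
      = (∑ i ∈ J, β i) - A n₀ n₀ * κ / (8 * π) * β n₀ := by
    have : ∀ i ∈ J, b i * β i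
        = β i - (if i = n₀ then A n₀ n₀ * κ / (8 * π) * β n₀ else 0) := by
      intro i _
      rw [hb]
      by_cases h : i = n₀
      · subst h; simp; ring
      · simp [h]
    rw [Finset.sum_congr rfl this, Finset.sum_sub_distrib,
      Finset.sum_ite_eq' J n₀ (fun _ => A n₀ n₀ * κ / (8 * π) * β n₀), if_pos hnJ]
  have h2 : ∑ i ∈ J, ∑ j ∈ J, Atil i j * β i * β j
      = (∑ i ∈ J, ∑ j ∈ J, A i j * β i * β j) - A n₀ n₀ * β n₀ * β n₀ := by
    have : ∀ i ∈ J, ∑ j ∈ J, Atil i j * β i * β j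
        = (∑ j ∈ J, A i j * β i * β j)
          - (if i = n₀ then A n₀ n₀ * β n₀ * β n₀ else 0) := by
      intro i _
      have hinner : ∀ j ∈ J, Atil i j * β i * β j
          = A i j * β i * β j
            - (if i = n₀ then (if j = n₀ then A n₀ n₀ * β n₀ * β n₀ else 0) else 0) := by
        intro j _
        rw [hAtil]
        by_cases hi : i = n₀ <;> by_cases hj : j = n₀ <;>
          simp [hi, hj] <;> subst_vars <;> ring
      rw [Finset.sum_congr rfl hinner, Finset.sum_sub_distrib]
      congr 1
      by_cases hi : i = n₀
      · simp only [hi, if_true]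
        rw [Finset.sum_ite_eq' J n₀ (fun _ => A n₀ n₀ * β n₀ * β n₀), if_pos hnJ]
      · simp [hi]
    rw [Finset.sum_congr rfl this, Finset.sum_sub_distrib,
      Finset.sum_ite_eq' J n₀ (fun _ => A n₀ n₀ * β n₀ * β n₀), if_pos hnJ]
  have hkey : LamW Atil b β J = Lam A β J + A n₀ n₀ * β n₀ * (β n₀ - κ) := by
    unfold LamW
    rw [h1, h2, lam_expand]
    field_simp
    ring
  have hLam : 0 ≤ Lam A β J := by
    by_cases hJ : J = Finset.univ
    · rw [hJ, hcrit₁]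
    · exact le_of_lt (hcrit₂ J hJne hJ)
  have hpos : 0 < A n₀ n₀ * β n₀ * (β n₀ - κ) :=
    mul_pos (mul_pos hnn (hβ n₀)) (sub_pos.2 hκβ)
  exact ⟨by rw [hkey]; linarith, hpos⟩
end
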